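/- arXiv:2408.10865 — 5 statements merged into one kernel-verified Lean document; each statement's English description precedes it below -/
import Mathlib

section
/- The greedy algorithm that assigns K players one by one, each time adding a player to an arm with maximal current marginal gain Δ_m(n_m) (where n_m is the number of players already assigned to arm m), produces a profile maximizing the total utility Σ_m U_m(n_m) over all profiles of nonnegative integers summing to K, provided each U_m satisfies U_m(0)=0 and has non-increasing marginal gains. -/
/-!
Induction on the number of steps: if `p` maximizes total utility among profiles with `t`
players and the greedy step adds a player to the arm `i` of largest marginal gain, then the new
profile is optimal for `t + 1` players. Indeed, any profile `n` with `t + 1` players overloads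
some arm `j` relative to `p`; removing one player from `j` leaves a profile worth at most `p`,
and by concavity the removed gain is at most the marginal gain of `j` at `p`, hence at most
that of `i`.
-/

open Finset Function

theorem antitone_sub_of_sub_le {V : ℕ → ℝ} (h : ∀ n, V (n + 2) - V (n + 1) ≤ V (n + 1) - V n) :
    Antitone fun n => V (n + 1) - V n :=
  antitone_nat_of_succ_le h

section Profiles

variable {ι : Type*} {s : Finset ι}

def IsOptimalProfile (U : ι → ℕ → ℝ) (s : Finset ι) (t : ℕ) (p : ι → ℕ) : Prop :=
  ∑ m ∈ s, p m = t ∧ ∀ n : ι → ℕ, ∑ m ∈ s, n m = t → ∑ m ∈ s, U m (n m) ≤ ∑ m ∈ s, U m (p m)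

theorem isOptimalProfile_zero (U : ι → ℕ → ℝ) (s : Finset ι) : IsOptimalProfile U s 0 0 := by
  refine ⟨sum_const_zero, fun n hn => le_of_eq (sum_congr rfl fun m hm => ?_)⟩
  rw [sum_eq_zero_iff.1 hn m hm, Pi.zero_apply]

variable [DecidableEq ι] {i : ι} {U : ι → ℕ → ℝ}

theorem Finset.sum_apply_update_of_mem {α G : Type*} [AddCommGroup G] (hi : i ∈ s)
    (f : ι → α → G) (p : ι → α) (a : α) :
    ∑ m ∈ s, f m (update p i a m) = ∑ m ∈ s, f m (p m) + (f i a - f i (p i)) := by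
  simp only [apply_update f, sum_update_of_mem hi,
    sum_eq_add_sum_sdiff_singleton_of_mem hi (fun m => f m (p m))]
  abel

theorem Finset.sum_update_succ_of_mem (hi : i ∈ s) (p : ι → ℕ) :
    ∑ m ∈ s, update p i (p i + 1) m = ∑ m ∈ s, p m + 1 := by
  rw [sum_update_of_mem hi, sum_eq_add_sum_sdiff_singleton_of_mem hi p]
  ring

theorem IsOptimalProfile.update_succ {t : ℕ} {p : ι → ℕ} (hp : IsOptimalProfile U s t p)
    (hconc : ∀ m, Antitone fun n => U m (n + 1) - U m n) (hi : i ∈ s)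
    (hmax : ∀ m ∈ s, U m (p m + 1) - U m (p m) ≤ U i (p i + 1) - U i (p i)) :
    IsOptimalProfile U s (t + 1) (update p i (p i + 1)) := by
  refine ⟨by rw [sum_update_succ_of_mem hi, hp.1], fun n hn => ?_⟩
  obtain ⟨j, hj, hlt⟩ : ∃ j ∈ s, p j < n j := exists_lt_of_sum_lt (by rw [hp.1, hn]; omega)
  set n' := update n j (n j - 1)
  have hn'j : n' j + 1 = n j := by simp only [n', update_self]; omega
  have hn_eq : n = update n' j (n' j + 1) := by
    rw [hn'j, update_idem, update_eq_self]
  have hn' : ∑ m ∈ s, n' m = t := by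
    have := sum_update_succ_of_mem hj n'
    rw [← hn_eq] at this
    omega
  have hremoved : U j (n j) - U j (n' j) ≤ U j (p j + 1) - U j (p j) := by
    simpa only [hn'j] using hconc j (show p j ≤ n' j by simp only [n', update_self]; omega)
  calc ∑ m ∈ s, U m (n m)
      = ∑ m ∈ s, U m (n' m) + (U j (n j) - U j (n' j)) := by
        conv_lhs => rw [hn_eq]
        rw [sum_apply_update_of_mem hj, hn'j]
    _ ≤ ∑ m ∈ s, U m (p m) + (U i (p i + 1) - U i (p i)) :=
        add_le_add (hp.2 n' hn') (hremoved.trans (hmax j hj))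
    _ = ∑ m ∈ s, U m (update p i (p i + 1) m) := (sum_apply_update_of_mem hi U p _).symm

end Profiles

theorem stmt_4_general (M K : ℕ)
    (U : ℕ → ℕ → ℝ)
    (hconc : ∀ m n, U m (n + 2) - U m (n + 1) ≤ U m (n + 1) - U m n)
    (prof : ℕ → ℕ → ℕ)
    (hinit : ∀ m, prof 0 m = 0)
    (hstep : ∀ t < K, ∃ i < M,
        (∀ m < M, U m (prof t m + 1) - U m (prof t m) ≤
            U i (prof t i + 1) - U i (prof t i)) ∧
        prof (t + 1) i = prof t i + 1 ∧ (∀ m, m ≠ i → prof (t + 1) m = prof t m)) :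
    ∀ n : ℕ → ℕ, (∑ m ∈ Finset.range M, n m = K) →
      ∑ m ∈ Finset.range M, U m (n m) ≤ ∑ m ∈ Finset.range M, U m (prof K m) := by
  have hoptimal : ∀ t ≤ K, IsOptimalProfile U (range M) t (prof t) := by
    intro t ht
    induction t with
    | zero =>
      rw [show prof 0 = 0 from funext hinit]
      exact isOptimalProfile_zero U (range M)
    | succ t ih =>
      obtain ⟨i, hi, hmax, hinc, hother⟩ := hstep t (by omega)
      rw [eq_update_iff.2 ⟨hinc, hother⟩]
      exact (ih (by omega)).update_succ (fun m => antitone_sub_of_sub_le (hconc m))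
        (mem_range.2 hi) fun m hm => hmax m (mem_range.1 hm)
  exact (hoptimal K le_rfl).2

/-- Greedy optimality: starting from the zero profile and performing `K` steps,
each incrementing an arm of maximal current marginal gain, yields a profile
maximizing `Σ_m U_m(n_m)` over all profiles of nonnegative integers summing
to `K`, provided `U_m(0) = 0` and marginal gains are non-increasing. -/
theorem stmt_4 (M K : ℕ) (hM : 0 < M) (hK : 0 < K)
    (U : ℕ → ℕ → ℝ) (hU0 : ∀ m, U m 0 = 0)
    (hconc : ∀ m n, U m (n + 2) - U m (n + 1) ≤ U m (n + 1) - U m n)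
    (prof : ℕ → ℕ → ℕ)
    (hinit : ∀ m, prof 0 m = 0)
    (hstep : ∀ t < K, ∃ i < M,
        (∀ m < M, U m (prof t m + 1) - U m (prof t m) ≤
            U i (prof t i + 1) - U i (prof t i)) ∧
        prof (t + 1) i = prof t i + 1 ∧ (∀ m, m ≠ i → prof (t + 1) m = prof t m)) :
    ∀ n : ℕ → ℕ, (∑ m ∈ Finset.range M, n m = K) →
      ∑ m ∈ Finset.range M, U m (n m) ≤ ∑ m ∈ Finset.range M, U m (prof K m) :=
  stmt_4_general M K U hconc prof hinit hstep
end

section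
/- For integers 1 ≤ n ≤ N with n ≤ N − 1, the probability that a Binomial(N, n/N) random variable equals exactly n, i.e., g(N, n) = C(N, n)(n/N)^n (1 − n/N)^{N−n}, satisfies g(N−1, n) ≥ g(N, n) whenever n ≤ N − 2. That is, decreasing the number of trials while keeping the target count fixed (and adjusting the success probability to n/(N−1)) does not decrease the probability of exactly n successes. -/
/-- Weighted AM-GM with natural-number multiplicities. -/
lemma amgm_nat (a b : ℝ) (ha : 0 ≤ a) (hb : 0 ≤ b) (k m : ℕ) (hk : 0 < k + m)
    (h : (k : ℝ) * a + (m : ℝ) * b = (k : ℝ) + m) : a ^ k * b ^ m ≤ 1 := by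
  set s : ℝ := (k : ℝ) + m with hs
  have hs0 : (0 : ℝ) < s := by
    have : (0 : ℝ) < ((k + m : ℕ) : ℝ) := by exact_mod_cast hk
    simpa [hs] using this
  have hw : (k : ℝ) / s + (m : ℝ) / s = 1 := by
    field_simp
    exact hs.symm
  have key := Real.geom_mean_le_arith_mean2_weighted
    (div_nonneg (Nat.cast_nonneg k) hs0.le) (div_nonneg (Nat.cast_nonneg m) hs0.le)
    ha hb hw
  have hsum : (k : ℝ) / s * a + (m : ℝ) / s * b = 1 := by
    field_simp
    linarith [h]
  rw [hsum] at key
  have hx : (0 : ℝ) ≤ a ^ ((k : ℝ) / s) * b ^ ((m : ℝ) / s) :=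
    mul_nonneg (Real.rpow_nonneg ha _) (Real.rpow_nonneg hb _)
  have hpow := pow_le_one₀ hx key (n := k + m)
  have heq : (a ^ ((k : ℝ) / s) * b ^ ((m : ℝ) / s)) ^ (k + m) = a ^ k * b ^ m := by
    rw [mul_pow, ← Real.rpow_natCast (a ^ ((k : ℝ)/s)) (k+m),
        ← Real.rpow_natCast (b ^ ((m : ℝ)/s)) (k+m),
        ← Real.rpow_mul ha, ← Real.rpow_mul hb]
    have hkm : ((k + m : ℕ) : ℝ) = s := by push_cast [hs]; ring
    rw [hkm, div_mul_cancel₀ _ hs0.ne', div_mul_cancel₀ _ hs0.ne',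
        Real.rpow_natCast, Real.rpow_natCast]
  rw [heq] at hpow
  exact hpow

/-- For `g(N, n) = C(N, n)(n/N)^n(1 − n/N)^{N−n}` (the probability that a
`Binomial(N, n/N)` variable equals `n`), if `1 ≤ n` and `n ≤ N − 2`, then
`g(N−1, n) ≥ g(N, n)`. -/
theorem stmt_6 (N n : ℕ) (h1 : 1 ≤ n) (h2 : n + 2 ≤ N) :
    ((N.choose n : ℝ) * ((n : ℝ) / N) ^ n * (1 - (n : ℝ) / N) ^ (N - n)) ≤
      ((N - 1).choose n : ℝ) * ((n : ℝ) / (N - 1 : ℕ)) ^ n *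
        (1 - (n : ℝ) / (N - 1 : ℕ)) ^ (N - 1 - n) := by
  set x : ℝ := (N : ℝ) with hxdef
  set y : ℝ := (n : ℝ) with hydef
  have hy1 : (1 : ℝ) ≤ y := by rw [hydef]; exact_mod_cast h1
  have hyx : y + 2 ≤ x := by rw [hxdef, hydef]; exact_mod_cast h2
  have hx0 : (0 : ℝ) < x := by linarith
  have hx1 : (0 : ℝ) < x - 1 := by linarith
  have hxy : (0 : ℝ) < x - y := by linarith
  have hx1y : (0 : ℝ) < x - 1 - y := by linarith
  have hcM : ((N - 1 : ℕ) : ℝ) = x - 1 := by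
    rw [Nat.cast_sub (by omega)]; simp [hxdef]
  have hm : N - n = (N - 1 - n) + 1 := by omega
  set m : ℕ := N - 1 - n with hmdef
  have hcm : (m : ℝ) = x - 1 - y := by
    rw [hmdef, Nat.cast_sub (by omega), Nat.cast_sub (by omega)]
    simp [hxdef, hydef]
  -- choose identity
  have hchoose : ((N - 1).choose n : ℝ) * x = (N.choose n : ℝ) * (x - y) := by
    have h := Nat.choose_mul_succ_eq (N - 1) n
    have hN1 : N - 1 + 1 = N := by omega
    rw [hN1] at h
    have : (((N - 1).choose n * N : ℕ) : ℝ) = ((N.choose n * (N - n) : ℕ) : ℝ) := by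
      exact_mod_cast congrArg (Nat.cast : ℕ → ℝ) h
    push_cast [Nat.cast_sub (by omega : n ≤ N)] at this
    linarith [this]
  set a : ℝ := (x - 1) / x with hadef
  set b : ℝ := ((x - 1) * (x - y)) / (x * (x - 1 - y)) with hbdef
  have ha0 : 0 ≤ a := by positivity
  have hb0 : 0 ≤ b := by positivity
  -- AM-GM ratio bound
  have hratio : a ^ n * b ^ m ≤ 1 := by
    apply amgm_nat a b ha0 hb0 n m (by omega)
    rw [hadef, hbdef, hcm, hydef.symm]
    field_simp
    ring
  -- base factorizations
  have hbase1 : y / x = (y / (x - 1)) * a := by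
    rw [hadef]; field_simp
  have hbase2 : 1 - y / x = (1 - y / (x - 1)) * b := by
    rw [hbdef]; field_simp
  -- key equality
  have hkey : (N.choose n : ℝ) * (y / x) ^ n * (1 - y / x) ^ (N - n) =
      ((N - 1).choose n : ℝ) * (y / (x - 1)) ^ n * (1 - y / (x - 1)) ^ m *
        (a ^ n * b ^ m) := by
    rw [hm, pow_succ, hbase2, hbase1, mul_pow, mul_pow]
    have hc : (N.choose n : ℝ) * ((1 - y / (x - 1)) * b) = ((N - 1).choose n : ℝ) := by
      have hb' : (1 - y / (x - 1)) * b = (x - y) / x := by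
        rw [hbdef]; field_simp
      rw [hb']
      field_simp
      linarith [hchoose]
    calc (N.choose n : ℝ) * ((y / (x - 1)) ^ n * a ^ n) *
          ((1 - y / (x - 1)) ^ m * b ^ m * ((1 - y / (x - 1)) * b))
        = ((N.choose n : ℝ) * ((1 - y / (x - 1)) * b)) * ((y / (x - 1)) ^ n *
            (1 - y / (x - 1)) ^ m * (a ^ n * b ^ m)) := by ring
      _ = ((N - 1).choose n : ℝ) * (y / (x - 1)) ^ n * (1 - y / (x - 1)) ^ m *
            (a ^ n * b ^ m) := by rw [hc]; ring
  have hRHSnn : 0 ≤ ((N - 1).choose n : ℝ) * (y / (x - 1)) ^ n * (1 - y / (x - 1)) ^ m := by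
    have : 0 ≤ 1 - y / (x - 1) := by
      rw [sub_nonneg, div_le_one hx1]; linarith
    positivity
  rw [hcM]
  calc (N.choose n : ℝ) * (y / x) ^ n * (1 - y / x) ^ (N - n)
      = ((N - 1).choose n : ℝ) * (y / (x - 1)) ^ n * (1 - y / (x - 1)) ^ m *
          (a ^ n * b ^ m) := hkey
    _ ≤ ((N - 1).choose n : ℝ) * (y / (x - 1)) ^ n * (1 - y / (x - 1)) ^ m * 1 :=
        mul_le_mul_of_nonneg_left hratio hRHSnn
    _ = ((N - 1).choose n : ℝ) * (y / (x - 1)) ^ n * (1 - y / (x - 1)) ^ m := by ring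
end

section
/- For integers 2 ≤ n ≤ N, the probability g(N, n) = C(N, n)(n/N)^n(1 − n/N)^{N−n} satisfies g(N−1, n−1) ≥ g(N, n). That is, simultaneously decreasing the number of trials and the target count by one does not decrease the probability of hitting the target exactly. -/
lemma key_pow (k : ℕ) (hk : 1 ≤ k) :
    ((k : ℝ) + 1) ^ (2 * k + 1) ≤ (k : ℝ) ^ k * ((k : ℝ) + 2) ^ (k + 1) := by
  have hk' : (1 : ℝ) ≤ k := by exact_mod_cast hk
  set c : ℝ := (k : ℝ) + 1 with hc
  have hc0 : 0 < c := by positivity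
  have ha : (-2 : ℝ) ≤ -(1 / c ^ 2) := by
    have : (1 : ℝ) / c ^ 2 ≤ 1 := by
      rw [div_le_one (by positivity)]; nlinarith
    linarith
  have hb := one_add_mul_le_pow ha (k + 1)
  have hL : 1 + (↑(k + 1) : ℝ) * -(1 / c ^ 2) = 1 - 1 / c := by
    push_cast [hc]
    field_simp
    ring
  rw [hL] at hb
  -- multiply both sides by c ^ (2k+2)
  have hmul := mul_le_mul_of_nonneg_right hb (by positivity : (0:ℝ) ≤ c ^ (2 * k + 2))
  have hc2 : c ^ (2 * k + 2) = (c ^ 2) ^ (k + 1) := by rw [← pow_mul]; ring_nf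
  have hRHS : (1 + -(1 / c ^ 2)) ^ (k + 1) * c ^ (2 * k + 2) =
      ((k : ℝ) * ((k : ℝ) + 2)) ^ (k + 1) := by
    rw [hc2, ← mul_pow]
    congr 1
    field_simp [hc]
    ring
  have hLHS : (1 - 1 / c) * c ^ (2 * k + 2) = (k : ℝ) * (c ^ (2 * k + 1)) := by
    have : c ^ (2 * k + 2) = c * c ^ (2 * k + 1) := by ring
    rw [this]
    field_simp [hc]
    ring
  rw [hRHS, hLHS] at hmul
  rw [mul_pow, pow_succ ((k:ℝ)) k] at hmul
  -- hmul : k * c^(2k+1) ≤ k^k * k * (k+2)^(k+1)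
  have hk0 : (0 : ℝ) < k := by linarith
  rw [hc]
  nlinarith [hmul]

lemma mono_pow (m M : ℕ) (hm : 1 ≤ m) (h : m ≤ M) :
    ((m : ℝ) + 1) ^ m * (M : ℝ) ^ M ≤ (m : ℝ) ^ m * ((M : ℝ) + 1) ^ M := by
  induction M, h using Nat.le_induction with
  | base => exact le_of_eq (by ring)
  | succ M hmM ih =>
    have hM1 : 1 ≤ M := le_trans hm hmM
    have hkey := key_pow M hM1
    have hM0 : (0 : ℝ) < (M : ℝ) ^ M := by positivity
    push_cast
    have h1 : ((m : ℝ) + 1) ^ m * ((M : ℝ) + 1) ^ (M + 1) * (M : ℝ) ^ M ≤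
        (m : ℝ) ^ m * (((M : ℝ) + 1) ^ (2 * M + 1)) := by
      have := mul_le_mul_of_nonneg_right ih (by positivity : (0:ℝ) ≤ ((M:ℝ)+1) ^ (M+1))
      calc ((m : ℝ) + 1) ^ m * ((M : ℝ) + 1) ^ (M + 1) * (M : ℝ) ^ M
          = ((m : ℝ) + 1) ^ m * (M : ℝ) ^ M * ((M : ℝ) + 1) ^ (M + 1) := by ring
        _ ≤ (m : ℝ) ^ m * ((M : ℝ) + 1) ^ M * ((M : ℝ) + 1) ^ (M + 1) := this
        _ = (m : ℝ) ^ m * (((M : ℝ) + 1) ^ (2 * M + 1)) := by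
            rw [mul_assoc, ← pow_add]; ring_nf
    have h2 : (m : ℝ) ^ m * (((M : ℝ) + 1) ^ (2 * M + 1)) ≤
        (m : ℝ) ^ m * ((M : ℝ) ^ M * ((M : ℝ) + 2) ^ (M + 1)) :=
      mul_le_mul_of_nonneg_left hkey (by positivity)
    have h3 := le_trans h1 h2
    refine le_of_mul_le_mul_right ?_ hM0
    calc ((m : ℝ) + 1) ^ m * ((M : ℝ) + 1) ^ (M + 1) * (M : ℝ) ^ M
        ≤ (m : ℝ) ^ m * ((M : ℝ) ^ M * ((M : ℝ) + 2) ^ (M + 1)) := h3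
      _ = (m : ℝ) ^ m * ((M : ℝ) + 1 + 1) ^ (M + 1) * (M : ℝ) ^ M := by ring

/-- For `g(N, n) = C(N, n)(n/N)^n(1 − n/N)^{N−n}` and `2 ≤ n ≤ N`,
`g(N−1, n−1) ≥ g(N, n)`. -/
theorem stmt_7 (N n : ℕ) (h1 : 2 ≤ n) (h2 : n ≤ N) :
    ((N.choose n : ℝ) * ((n : ℝ) / N) ^ n * (1 - (n : ℝ) / N) ^ (N - n)) ≤
      ((N - 1).choose (n - 1) : ℝ) * (((n - 1 : ℕ) : ℝ) / (N - 1 : ℕ)) ^ (n - 1) *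
        (1 - ((n - 1 : ℕ) : ℝ) / (N - 1 : ℕ)) ^ (N - 1 - (n - 1)) := by
  obtain ⟨m, rfl⟩ : ∃ m, n = m + 1 := ⟨n - 1, by omega⟩
  obtain ⟨M, rfl⟩ : ∃ M, N = M + 1 := ⟨N - 1, by omega⟩
  have hm : 1 ≤ m := by omega
  have hmM : m ≤ M := by omega
  simp only [Nat.add_sub_cancel, Nat.succ_sub_succ, Nat.sub_zero]
  rcases eq_or_lt_of_le hmM with rfl | hlt
  · -- m = M : both sides equal 1
    have hM0 : ((m : ℝ) + 1) ≠ 0 := by positivity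
    have hm0 : (m : ℝ) ≠ 0 := by
      have : (1:ℝ) ≤ m := by exact_mod_cast hm
      linarith
    simp [Nat.choose_self, Nat.sub_self, div_self, hM0, hm0]
  · -- m < M
    have hM1 : 1 ≤ M := le_trans hm hmM
    have hMp : (0 : ℝ) < M := by exact_mod_cast hM1
    have hMp1 : (0 : ℝ) < (M : ℝ) + 1 := by positivity
    have hmp : (0 : ℝ) < m := by exact_mod_cast hm
    have hd : (0 : ℝ) < (M : ℝ) - m := by
      have : (m:ℝ) < M := by exact_mod_cast hlt
      linarith
    push_cast
    -- rewrite the (1 - ·) terms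
    have e1 : 1 - ((m : ℝ) + 1) / ((M : ℝ) + 1) = ((M : ℝ) - m) / ((M : ℝ) + 1) := by
      field_simp
      ring
    have e2 : 1 - (m : ℝ) / (M : ℝ) = ((M : ℝ) - m) / (M : ℝ) := by
      field_simp
    rw [e1, e2]
    -- choose identity
    have hch : (((M + 1).choose (m + 1) : ℕ) : ℝ) * (((m : ℝ) + 1) / ((M : ℝ) + 1)) =
        ((M.choose m : ℕ) : ℝ) := by
      have h := Nat.add_one_mul_choose_eq M m
      have h' : ((M + 1 : ℕ) : ℝ) * (M.choose m : ℝ) =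
          ((M + 1).choose (m + 1) : ℝ) * ((m + 1 : ℕ) : ℝ) := by exact_mod_cast congrArg (Nat.cast : ℕ → ℝ) h
      push_cast at h'
      field_simp
      linarith [h']
    have hsplit : (((M + 1).choose (m + 1) : ℕ) : ℝ) * (((m : ℝ) + 1) / ((M : ℝ) + 1)) ^ (m + 1)
        = ((M.choose m : ℕ) : ℝ) * (((m : ℝ) + 1) / ((M : ℝ) + 1)) ^ m := by
      rw [pow_succ]
      rw [show (((M + 1).choose (m + 1) : ℕ) : ℝ) * ((((m : ℝ) + 1) / ((M : ℝ) + 1)) ^ m *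
        (((m : ℝ) + 1) / ((M : ℝ) + 1))) = (((M + 1).choose (m + 1) : ℕ) : ℝ) *
        (((m : ℝ) + 1) / ((M : ℝ) + 1)) * (((m : ℝ) + 1) / ((M : ℝ) + 1)) ^ m from by ring, hch]
    rw [hsplit]
    have hC : (0 : ℝ) ≤ ((M.choose m : ℕ) : ℝ) := by positivity
    rw [mul_assoc, mul_assoc]
    refine mul_le_mul_of_nonneg_left ?_ hC
    -- core inequality
    obtain ⟨d, hdM⟩ : ∃ d, M = m + d := ⟨M - m, by omega⟩
    have hMm : M - m = d := by omega
    rw [hMm]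
    rw [div_pow, div_pow, div_pow, div_pow, div_mul_div_comm, div_mul_div_comm,
      ← pow_add, ← pow_add]
    rw [div_le_div_iff₀ (by positivity) (by positivity)]
    have hmono := mono_pow m M hm hmM
    have hpow : (0 : ℝ) ≤ ((M : ℝ) - m) ^ d := le_of_lt (by positivity)
    have := mul_le_mul_of_nonneg_right hmono hpow
    calc ((m : ℝ) + 1) ^ m * ((M : ℝ) - m) ^ d * (M : ℝ) ^ (m + d)
        = (((m : ℝ) + 1) ^ m * (M : ℝ) ^ M) * ((M : ℝ) - m) ^ d := by
          rw [hdM]; push_cast; ring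
      _ ≤ ((m : ℝ) ^ m * ((M : ℝ) + 1) ^ M) * ((M : ℝ) - m) ^ d := this
      _ = (m : ℝ) ^ m * ((M : ℝ) - m) ^ d * ((M : ℝ) + 1) ^ (m + d) := by
          rw [hdM]; push_cast; ring
end

section
/- The inequality C(N, n)(n/N)^n(1 − n/N)^{N−n} ≥ C(K, k)(k/K)^k(1 − k/K)^{K−k} holds whenever 1 ≤ n ≤ N ≤ K, n ≤ k, K − k ≥ N − n, and k ≤ K. In particular, for a process where N decreases over time and n decreases weakly, the probability of exactly n successes in N Binomial(N, n/N) trials is minimized at the initial values (N, n) = (K, n*). -/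
/-- Auxiliary: `(b+1)^(2b+1) ≤ b^b (b+2)^(b+1)`, i.e. one step of monotonicity of
`(1+1/x)^x`, proved via Bernoulli. -/
lemma aux_step1 (b : ℕ) : ((b:ℝ)+1)^(2*b+1) ≤ (b:ℝ)^b * ((b:ℝ)+2)^(b+1) := by
  have hb1 : (0:ℝ) < (b:ℝ)+1 := by positivity
  have hb2 : (0:ℝ) < (b:ℝ)+2 := by positivity
  have hB : (0:ℝ) < (((b:ℝ)+1)^2)^b := by positivity
  have h := one_add_mul_le_pow (a := -((1:ℝ)/((b:ℝ)+1)^2)) (by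
    have h1 : (1:ℝ) ≤ ((b:ℝ)+1)^2 := by nlinarith [Nat.cast_nonneg (α := ℝ) b]
    have h0 : (1:ℝ)/((b:ℝ)+1)^2 ≤ 1 := by
      rw [div_le_one (by positivity)]; exact h1
    linarith) b
  have e1 : (1 + -((1:ℝ)/((b:ℝ)+1)^2)) = (b:ℝ)*((b:ℝ)+2)/(((b:ℝ)+1)^2) := by
    field_simp; ring
  rw [e1, div_pow] at h
  -- h : 1 + b * -(1/(b+1)^2) ≤ (b*(b+2))^b / ((b+1)^2)^b
  have h2 : (1 + (b:ℝ) * -((1:ℝ)/((b:ℝ)+1)^2)) * (((b:ℝ)+1)^2)^b ≤ ((b:ℝ)*((b:ℝ)+2))^b := by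
    rw [← le_div_iff₀ hB]; exact h
  have h3 : ((b:ℝ)+1) ≤ ((b:ℝ)+2) * (1 + (b:ℝ) * -((1:ℝ)/((b:ℝ)+1)^2)) := by
    rw [← sub_nonneg]
    have hne : ((b:ℝ)+1)^2 ≠ 0 := by positivity
    have e : ((b:ℝ)+2) * (1 + (b:ℝ) * -((1:ℝ)/((b:ℝ)+1)^2)) - ((b:ℝ)+1)
        = 1 / ((b:ℝ)+1)^2 := by field_simp; ring
    rw [e]; positivity
  have key : ((b:ℝ)+1) * (((b:ℝ)+1)^2)^b ≤ ((b:ℝ)+2) * ((b:ℝ)*((b:ℝ)+2))^b := by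
    calc ((b:ℝ)+1) * (((b:ℝ)+1)^2)^b
        ≤ (((b:ℝ)+2) * (1 + (b:ℝ) * -((1:ℝ)/((b:ℝ)+1)^2))) * (((b:ℝ)+1)^2)^b :=
          mul_le_mul_of_nonneg_right h3 (le_of_lt hB)
      _ = ((b:ℝ)+2) * ((1 + (b:ℝ) * -((1:ℝ)/((b:ℝ)+1)^2)) * (((b:ℝ)+1)^2)^b) := by ring
      _ ≤ ((b:ℝ)+2) * ((b:ℝ)*((b:ℝ)+2))^b := by
          exact mul_le_mul_of_nonneg_left h2 (le_of_lt hb2)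
  calc ((b:ℝ)+1)^(2*b+1) = ((b:ℝ)+1) * (((b:ℝ)+1)^2)^b := by
        rw [← pow_mul]; rw [pow_succ']
      _ ≤ ((b:ℝ)+2) * ((b:ℝ)*((b:ℝ)+2))^b := key
      _ = (b:ℝ)^b * ((b:ℝ)+2)^(b+1) := by rw [mul_pow, pow_succ]; ring

lemma aux_powpos (b : ℕ) : (0:ℝ) < (b:ℝ)^b := by
  rcases Nat.eq_zero_or_pos b with h | h
  · simp [h]
  · have : (0:ℝ) < (b:ℝ) := by exact_mod_cast h
    positivity

/-- `(1+1/a)^a ≤ (1+1/b)^b` in cleared form. -/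
lemma aux_mono (a b : ℕ) (hab : a ≤ b) :
    ((a:ℝ)+1)^a * (b:ℝ)^b ≤ (a:ℝ)^a * ((b:ℝ)+1)^b := by
  induction b, hab using Nat.le_induction with
  | base => rw [mul_comm]
  | succ b hab IH =>
    push_cast
    have hbb := aux_powpos b
    have h1 : ((a:ℝ)+1)^a * (b:ℝ)^b * ((b:ℝ)+1)^(b+1)
        ≤ (a:ℝ)^a * ((b:ℝ)+1)^b * ((b:ℝ)+1)^(b+1) :=
      mul_le_mul_of_nonneg_right IH (by positivity)
    have h2 : (a:ℝ)^a * ((b:ℝ)+1)^b * ((b:ℝ)+1)^(b+1)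
        = (a:ℝ)^a * ((b:ℝ)+1)^(2*b+1) := by
      rw [mul_assoc, ← pow_add]; ring_nf
    have h3 : (a:ℝ)^a * ((b:ℝ)+1)^(2*b+1) ≤ (a:ℝ)^a * ((b:ℝ)^b * ((b:ℝ)+2)^(b+1)) :=
      mul_le_mul_of_nonneg_left (aux_step1 b) (le_of_lt (aux_powpos a))
    have h4 : ((a:ℝ)+1)^a * (b:ℝ)^b * ((b:ℝ)+1)^(b+1)
        ≤ (a:ℝ)^a * ((b:ℝ)^b * ((b:ℝ)+2)^(b+1)) := by
      calc ((a:ℝ)+1)^a * (b:ℝ)^b * ((b:ℝ)+1)^(b+1)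
          ≤ (a:ℝ)^a * ((b:ℝ)+1)^b * ((b:ℝ)+1)^(b+1) := h1
        _ = (a:ℝ)^a * ((b:ℝ)+1)^(2*b+1) := h2
        _ ≤ (a:ℝ)^a * ((b:ℝ)^b * ((b:ℝ)+2)^(b+1)) := h3
    have := le_of_mul_le_mul_right (a := (b:ℝ)^b)
      (by calc ((a:ℝ)+1)^a * ((b:ℝ)+1)^(b+1) * (b:ℝ)^b
            = ((a:ℝ)+1)^a * (b:ℝ)^b * ((b:ℝ)+1)^(b+1) := by ring
          _ ≤ (a:ℝ)^a * ((b:ℝ)^b * ((b:ℝ)+2)^(b+1)) := h4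
          _ = (a:ℝ)^a * ((b:ℝ)+2)^(b+1) * (b:ℝ)^b := by ring) hbb
    convert this using 3
    · rfl
    · ring

noncomputable def auxf (N n : ℕ) : ℝ :=
  (N.choose n : ℝ) * ((n : ℝ) / N) ^ n * (1 - (n : ℝ) / N) ^ (N - n)

lemma auxf_eq (N n : ℕ) (hnN : n ≤ N) (hN : 0 < N) :
    auxf N n = (N.choose n : ℝ) * (n:ℝ)^n * ((N - n : ℕ):ℝ)^(N-n) / (N:ℝ)^N := by
  have hN0 : (N:ℝ) ≠ 0 := by positivity
  have h1 : (1 - (n:ℝ)/N) = ((N-n:ℕ):ℝ)/N := by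
    rw [Nat.cast_sub hnN]; field_simp
  have hpow : (N:ℝ)^n * (N:ℝ)^(N-n) = (N:ℝ)^N := by
    rw [← pow_add, Nat.add_sub_cancel' hnN]
  rw [auxf, h1, div_pow, div_pow]
  calc (N.choose n : ℝ) * ((n:ℝ)^n / (N:ℝ)^n) * (((N-n:ℕ):ℝ)^(N-n) / (N:ℝ)^(N-n))
      = (N.choose n : ℝ) * (n:ℝ)^n * ((N-n:ℕ):ℝ)^(N-n) / ((N:ℝ)^n * (N:ℝ)^(N-n)) := by
        ring
    _ = (N.choose n : ℝ) * (n:ℝ)^n * ((N-n:ℕ):ℝ)^(N-n) / (N:ℝ)^N := by rw [hpow]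


lemma aux_S1 (N n : ℕ) (hn : 1 ≤ n) (hnN : n ≤ N) : auxf (N+1) (n+1) ≤ auxf N n := by
  have hN : 0 < N := lt_of_lt_of_le hn hnN
  have hNr : (0:ℝ) < (N:ℝ) := by exact_mod_cast hN
  rw [auxf_eq (N+1) (n+1) (by omega) (by omega), auxf_eq N n hnN hN]
  rw [div_le_div_iff₀ (by positivity) (by positivity)]
  have hsub : N + 1 - (n + 1) = N - n := by omega
  rw [hsub]
  -- choose identity
  have hC : ((N+1).choose (n+1) : ℝ) * ((n:ℝ)+1) = ((N:ℝ)+1) * (N.choose n : ℝ) := by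
    have := Nat.add_one_mul_choose_eq N n
    have : ((N+1) * N.choose n : ℕ) = ((N+1).choose (n+1) * (n+1) : ℕ) := by
      simpa [Nat.succ_eq_add_one] using this
    have h' : ((N:ℝ)+1) * (N.choose n : ℝ) = ((N+1).choose (n+1) : ℝ) * ((n:ℝ)+1) := by
      exact_mod_cast congrArg (Nat.cast (R := ℝ)) this
    linarith [h']
  have hmono := aux_mono n N hnN
  have hkey := mul_le_mul_of_nonneg_left hmono
    (show (0:ℝ) ≤ (N.choose n : ℝ) * ((N:ℝ)+1) * ((N-n:ℕ):ℝ)^(N-n) by positivity)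
  -- rewrite both sides
  have lhs_eq : ((N+1).choose (n+1) : ℝ) * ((n+1:ℕ):ℝ)^(n+1) * ((N-n:ℕ):ℝ)^(N-n) * (N:ℝ)^N
      = (N.choose n : ℝ) * ((N:ℝ)+1) * ((N-n:ℕ):ℝ)^(N-n) * (((n:ℝ)+1)^n * (N:ℝ)^N) := by
    push_cast
    rw [pow_succ]
    linear_combination (((n:ℝ)+1)^n * ((N-n:ℕ):ℝ)^(N-n) * (N:ℝ)^N) * hC
  have rhs_eq : (N.choose n : ℝ) * (n:ℝ)^n * ((N-n:ℕ):ℝ)^(N-n) * ((N+1:ℕ):ℝ)^(N+1)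
      = (N.choose n : ℝ) * ((N:ℝ)+1) * ((N-n:ℕ):ℝ)^(N-n) * ((n:ℝ)^n * ((N:ℝ)+1)^N) := by
    push_cast
    rw [pow_succ]
    ring
  rw [lhs_eq, rhs_eq]
  exact hkey

lemma aux_S2 (N n : ℕ) (hn : 1 ≤ n) (hnN : n ≤ N) : auxf (N+1) n ≤ auxf N n := by
  have hN : 0 < N := lt_of_lt_of_le hn hnN
  have hNr : (0:ℝ) < (N:ℝ) := by exact_mod_cast hN
  set m := N - n with hm
  have hNm : N = n + m := by omega
  rw [auxf_eq (N+1) n (by omega) (by omega), auxf_eq N n hnN hN]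
  rw [div_le_div_iff₀ (by positivity) (by positivity)]
  have hsub : N + 1 - n = m + 1 := by omega
  rw [hsub]
  -- choose identity: C(N+1,n)*(m+1) = (N+1)*C(N,n)
  have hC : ((N+1).choose n : ℝ) * ((m:ℝ)+1) = ((N:ℝ)+1) * (N.choose n : ℝ) := by
    have h1 : (N+1).choose n = (N+1).choose (m+1) := by
      rw [← Nat.choose_symm (by omega : n ≤ N+1)]
      have e : N + 1 - n = m + 1 := by omega
      rw [e]
    have h2 : N.choose n = N.choose m := by
      rw [← Nat.choose_symm hnN]
    have := Nat.add_one_mul_choose_eq N m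
    have h3 : ((N+1) * N.choose m : ℕ) = ((N+1).choose (m+1) * (m+1) : ℕ) := by
      simpa [Nat.succ_eq_add_one] using this
    rw [h1, h2]
    have h' : ((N:ℝ)+1) * (N.choose m : ℝ) = ((N+1).choose (m+1) : ℝ) * ((m:ℝ)+1) := by
      exact_mod_cast congrArg (Nat.cast (R := ℝ)) h3
    linarith [h']
  have hmono := aux_mono m N (by omega)
  have hkey := mul_le_mul_of_nonneg_left hmono
    (show (0:ℝ) ≤ (N.choose n : ℝ) * ((N:ℝ)+1) * (n:ℝ)^n by positivity)
  have lhs_eq : ((N+1).choose n : ℝ) * (n:ℝ)^n * ((m+1:ℕ):ℝ)^(m+1) * (N:ℝ)^N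
      = (N.choose n : ℝ) * ((N:ℝ)+1) * (n:ℝ)^n * (((m:ℝ)+1)^m * (N:ℝ)^N) := by
    push_cast
    rw [pow_succ]
    linear_combination (((m:ℝ)+1)^m * (n:ℝ)^n * (N:ℝ)^N) * hC
  have rhs_eq : (N.choose n : ℝ) * (n:ℝ)^n * ((m:ℕ):ℝ)^m * ((N+1:ℕ):ℝ)^(N+1)
      = (N.choose n : ℝ) * ((N:ℝ)+1) * (n:ℝ)^n * ((m:ℝ)^m * ((N:ℝ)+1)^N) := by
    push_cast
    rw [pow_succ]
    ring
  rw [lhs_eq, rhs_eq]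
  exact hkey

lemma aux_chainS (N n a : ℕ) (hn : 1 ≤ n) (hnN : n ≤ N) :
    auxf (N+a) (n+a) ≤ auxf N n := by
  induction a with
  | zero => simp
  | succ a IH =>
    calc auxf (N+(a+1)) (n+(a+1)) = auxf ((N+a)+1) ((n+a)+1) := by ring_nf
      _ ≤ auxf (N+a) (n+a) := aux_S1 (N+a) (n+a) (by omega) (by omega)
      _ ≤ auxf N n := IH

lemma aux_chainF (N n b : ℕ) (hn : 1 ≤ n) (hnN : n ≤ N) :
    auxf (N+b) n ≤ auxf N n := by
  induction b with
  | zero => simp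
  | succ b IH =>
    calc auxf (N+(b+1)) n = auxf ((N+b)+1) n := by ring_nf
      _ ≤ auxf (N+b) n := aux_S2 (N+b) n hn (by omega)
      _ ≤ auxf N n := IH

/-- `C(N, n)(n/N)^n(1 − n/N)^{N−n} ≥ C(K, k)(k/K)^k(1 − k/K)^{K−k}` whenever
`1 ≤ n ≤ N ≤ K`, `n ≤ k ≤ K` and `K − k ≥ N − n`. -/
theorem stmt_8 (N n K k : ℕ) (hn : 1 ≤ n) (hnN : n ≤ N) (hNK : N ≤ K)
    (hnk : n ≤ k) (hkK : k ≤ K) (hgap : N - n ≤ K - k) :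
    ((K.choose k : ℝ) * ((k : ℝ) / K) ^ k * (1 - (k : ℝ) / K) ^ (K - k)) ≤
      (N.choose n : ℝ) * ((n : ℝ) / N) ^ n * (1 - (n : ℝ) / N) ^ (N - n) := by
  show auxf K k ≤ auxf N n
  obtain ⟨a, ha⟩ : ∃ a, k = n + a := ⟨k - n, by omega⟩
  obtain ⟨b, hb⟩ : ∃ b, K = N + a + b := ⟨K - (N + a), by omega⟩
  subst ha hb
  calc auxf (N + a + b) (n + a) ≤ auxf (N + a) (n + a) :=
        aux_chainF (N+a) (n+a) b (by omega) (by omega)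
    _ ≤ auxf N n := aux_chainS N n a hn hnN
end

section
/- Suppose for each arm m, the marginal gain function Δ_m : {0,...,K−1} → ℝ is strictly decreasing. If n* and ñ* are two profiles of nonnegative integers summing to K that both maximize Σ_m Σ_{j=1}^{n_m} Δ_m(j−1), then |n*_m − ñ*_m| ≤ 1 for every arm m, and whenever n*_m ≠ ñ*_m, the value Δ_m(max{n*_m, ñ*_m} − 1) equals the K-th largest element of the multiset {Δ_m(j) : m ∈ {1,...,M}, j ∈ {0,...,K−1}}. -/
open Finset

section helpers

variable {M K : ℕ} {Δ : Fin M → ℕ → ℝ}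

lemma anti_lem (hdec : ∀ m : Fin M, ∀ j : ℕ, j + 1 < K → Δ m (j + 1) < Δ m j)
    (m : Fin M) {i j : ℕ} (hij : i ≤ j) (hj : j < K) : Δ m j ≤ Δ m i := by
  induction j with
  | zero => simp [Nat.le_zero.mp hij]
  | succ k ih =>
    rcases Nat.lt_or_ge i (k + 1) with h | h
    · have h1 := hdec m k hj
      have h2 := ih (Nat.lt_succ_iff.mp h) (by omega)
      linarith
    · have : i = k + 1 := by omega
      simp [this]

lemma strict_anti_lem (hdec : ∀ m : Fin M, ∀ j : ℕ, j + 1 < K → Δ m (j + 1) < Δ m j)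
    (m : Fin M) {i j : ℕ} (hij : i < j) (hj : j < K) : Δ m j < Δ m i := by
  have h1 : Δ m j ≤ Δ m (i + 1) := anti_lem hdec m hij hj
  have h2 : Δ m (i + 1) < Δ m i := hdec m i (by omega)
  linarith

lemma sum_split {α : Type*} [AddCommMonoid α] (f : Fin M → α) {a b : Fin M} (hab : a ≠ b) :
    ∑ m, f m = f a + f b + ∑ m ∈ Finset.univ \ {a, b}, f m := by
  have h := Finset.sum_sdiff (f := f) (Finset.subset_univ ({a, b} : Finset (Fin M)))
  rw [Finset.sum_pair hab] at h
  rw [← h]; exact (add_comm _ _)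

lemma exchange_lem (n : Fin M → ℕ) (hs : ∑ m, n m = K)
    (hopt : ∀ n' : Fin M → ℕ, (∑ m, n' m = K) →
      ∑ m, ∑ j ∈ Finset.range (n' m), Δ m j ≤ ∑ m, ∑ j ∈ Finset.range (n m), Δ m j)
    (a b : Fin M) (hab : a ≠ b) (ha : 1 ≤ n a) :
    Δ b (n b) ≤ Δ a (n a - 1) := by
  classical
  set n' : Fin M → ℕ := fun m => if m = a then n a - 1 else if m = b then n b + 1 else n m
    with hn'
  have hna : n' a = n a - 1 := by simp [hn']
  have hnb : n' b = n b + 1 := by simp [hn', hab.symm]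
  have hrest : ∀ m ∈ Finset.univ \ ({a, b} : Finset (Fin M)), n' m = n m := by
    intro m hm
    simp only [Finset.mem_sdiff, Finset.mem_insert, Finset.mem_singleton] at hm
    have h1 : m ≠ a := fun h => hm.2 (Or.inl h)
    have h2 : m ≠ b := fun h => hm.2 (Or.inr h)
    simp [hn', h1, h2]
  have hsum' : ∑ m, n' m = K := by
    have e1 := sum_split n' hab
    have e2 := sum_split n hab
    have erest : ∑ m ∈ Finset.univ \ ({a, b} : Finset (Fin M)), n' m
        = ∑ m ∈ Finset.univ \ ({a, b} : Finset (Fin M)), n m :=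
      Finset.sum_congr rfl hrest
    rw [erest, hna, hnb] at e1
    omega
  have hobj := hopt n' hsum'
  have e1 := sum_split (fun m => ∑ j ∈ Finset.range (n' m), Δ m j) hab
  have e2 := sum_split (fun m => ∑ j ∈ Finset.range (n m), Δ m j) hab
  have hrest' : ∑ m ∈ Finset.univ \ ({a, b} : Finset (Fin M)),
      (∑ j ∈ Finset.range (n' m), Δ m j) =
      ∑ m ∈ Finset.univ \ ({a, b} : Finset (Fin M)), ∑ j ∈ Finset.range (n m), Δ m j :=
    Finset.sum_congr rfl fun m hm => by rw [hrest m hm]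
  have ea : ∑ j ∈ Finset.range (n a), Δ a j
      = ∑ j ∈ Finset.range (n' a), Δ a j + Δ a (n a - 1) := by
    rw [hna]
    have : n a = (n a - 1) + 1 := by omega
    rw [this, Finset.sum_range_succ]
    congr 1
  have eb : ∑ j ∈ Finset.range (n' b), Δ b j
      = ∑ j ∈ Finset.range (n b), Δ b j + Δ b (n b) := by
    rw [hnb, Finset.sum_range_succ]
  rw [e1, e2] at hobj
  rw [hrest', ea, eb] at hobj
  linarith

lemma sorted_getElem_ge (L : List ℝ) (hs : L.Pairwise (· ≤ ·)) (i : ℕ) (hi : i < L.length)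
    (c : ℝ) (hc : L.length - i ≤ L.countP (fun x => decide (c ≤ x))) : c ≤ L[i] := by
  by_contra h
  push_neg at h
  have htd : L = L.take (i + 1) ++ L.drop (i + 1) := (List.take_append_drop _ _).symm
  have h0 : (L.take (i + 1)).countP (fun x => decide (c ≤ x)) = 0 := by
    rw [List.countP_eq_zero]
    intro x hx
    obtain ⟨j, hj, hx'⟩ := List.mem_iff_getElem.mp hx
    have hjlen : j < L.length := by
      have := hj; rw [List.length_take] at this; omega
    have hji : j ≤ i := by
      have := hj; rw [List.length_take] at this; omega
    have hLe : L[j] ≤ L[i] := by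
      rcases Nat.lt_or_ge j i with hji' | hji'
      · exact List.pairwise_iff_getElem.mp hs j i hjlen hi hji'
      · have : j = i := by omega
        subst this; exact le_refl _
    rw [List.getElem_take] at hx'
    subst hx'
    simp only [decide_eq_true_eq]
    push_neg
    linarith
  have hcc := congrArg (List.countP (fun x => decide (c ≤ x))) htd
  rw [List.countP_append, h0, Nat.zero_add] at hcc
  have hle : (L.drop (i + 1)).countP (fun x => decide (c ≤ x)) ≤ (L.drop (i + 1)).length :=
    List.countP_le_length
  rw [List.length_drop] at hle
  omega

lemma sorted_getElem_le (L : List ℝ) (hs : L.Pairwise (· ≤ ·)) (i : ℕ) (hi : i < L.length)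
    (c : ℝ) (hc : L.countP (fun x => decide (c < x)) ≤ L.length - i - 1) : L[i] ≤ c := by
  by_contra h
  push_neg at h
  have hall : (L.drop i).countP (fun x => decide (c < x)) = (L.drop i).length := by
    rw [List.countP_eq_length]
    intro x hx
    obtain ⟨j, hj, hx'⟩ := List.mem_iff_getElem.mp hx
    rw [List.getElem_drop] at hx'
    have hjlen : i + j < L.length := by
      have := hj; rw [List.length_drop] at this; omega
    have hLe : L[i] ≤ L[i + j] := by
      rcases Nat.eq_zero_or_pos j with hj0 | hj0
      · subst hj0; simp
      · exact List.pairwise_iff_getElem.mp hs i (i + j) hi hjlen (by omega)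
    subst hx'
    simp only [decide_eq_true_eq]
    linarith
  have htd : L = L.take i ++ L.drop i := (List.take_append_drop _ _).symm
  have hcc := congrArg (List.countP (fun x => decide (c < x))) htd
  rw [List.countP_append, hall, List.length_drop] at hcc
  omega

lemma card_T (n : Fin M → ℕ) (hn : ∀ m, n m ≤ K) :
    ((Finset.univ ×ˢ Finset.range K).filter fun p : Fin M × ℕ => p.2 < n p.1).card
      = ∑ m, n m := by
  classical
  rw [Finset.card_filter, Finset.sum_product]
  refine Finset.sum_congr rfl fun m _ => ?_
  have : ∑ j ∈ Finset.range K, (if (m, j).2 < n (m, j).1 then 1 else 0)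
      = ((Finset.range K).filter (fun j => j < n m)).card := by
    rw [Finset.card_filter]
  rw [this]
  have : (Finset.range K).filter (fun j => j < n m) = Finset.range (n m) := by
    ext j
    simp only [Finset.mem_filter, Finset.mem_range]
    constructor
    · rintro ⟨_, h⟩; exact h
    · intro h; exact ⟨lt_of_lt_of_le h (hn m), h⟩
  rw [this, Finset.card_range]

end helpers

lemma main_aux (M K : ℕ) (hM : 0 < M) (hK : 0 < K)
    (Δ : Fin M → ℕ → ℝ)
    (hdec : ∀ m : Fin M, ∀ j : ℕ, j + 1 < K → Δ m (j + 1) < Δ m j)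
    (n₁ n₂ : Fin M → ℕ)
    (hs₁ : ∑ m, n₁ m = K) (hs₂ : ∑ m, n₂ m = K)
    (hopt₁ : ∀ n : Fin M → ℕ, (∑ m, n m = K) →
      ∑ m, ∑ j ∈ Finset.range (n m), Δ m j ≤
        ∑ m, ∑ j ∈ Finset.range (n₁ m), Δ m j)
    (hopt₂ : ∀ n : Fin M → ℕ, (∑ m, n m = K) →
      ∑ m, ∑ j ∈ Finset.range (n m), Δ m j ≤
        ∑ m, ∑ j ∈ Finset.range (n₂ m), Δ m j)
    (m : Fin M) (hlt : n₂ m < n₁ m) :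
    n₁ m = n₂ m + 1 ∧
      Δ m (n₁ m - 1) =
        (((Finset.univ ×ˢ Finset.range K).val.map
            fun p : Fin M × ℕ => Δ p.1 p.2).sort (· ≤ ·)).getD (M * K - K) 0 := by
  classical
  have hle₁ : ∀ m' : Fin M, n₁ m' ≤ K := by
    intro m'
    calc n₁ m' ≤ ∑ m, n₁ m := Finset.single_le_sum (fun i _ => Nat.zero_le _) (Finset.mem_univ m')
    _ = K := hs₁
  have hle₂ : ∀ m' : Fin M, n₂ m' ≤ K := by
    intro m'
    calc n₂ m' ≤ ∑ m, n₂ m := Finset.single_le_sum (fun i _ => Nat.zero_le _) (Finset.mem_univ m')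
    _ = K := hs₂
  obtain ⟨m', hm'⟩ : ∃ m', n₁ m' < n₂ m' := by
    by_contra h
    push_neg at h
    have := Finset.sum_lt_sum (fun i _ => h i) ⟨m, Finset.mem_univ m, hlt⟩
    omega
  have hab : m' ≠ m := by
    intro h; subst h; omega
  have h1 : Δ m' (n₁ m') ≤ Δ m (n₁ m - 1) :=
    exchange_lem n₁ hs₁ hopt₁ m m' hab.symm (by omega)
  have h2 : Δ m (n₂ m) ≤ Δ m' (n₂ m' - 1) :=
    exchange_lem n₂ hs₂ hopt₂ m' m hab (by omega)
  have h3 : Δ m (n₁ m - 1) ≤ Δ m (n₂ m) :=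
    anti_lem hdec m (by omega) (by have := hle₁ m; omega)
  have h4 : Δ m' (n₂ m' - 1) ≤ Δ m' (n₁ m') :=
    anti_lem hdec m' (by omega) (by have := hle₂ m'; omega)
  have hstep : n₁ m = n₂ m + 1 := by
    by_contra h
    have hlt' : n₂ m < n₁ m - 1 := by omega
    have := strict_anti_lem hdec m hlt' (by have := hle₁ m; omega)
    linarith
  have hc1 : Δ m (n₁ m - 1) = Δ m (n₂ m) := by
    rw [hstep]; simp
  set c := Δ m (n₂ m) with hc
  -- every element taken by n₂ is ≥ c
  have hgeK : ∀ p : Fin M × ℕ, p.2 < n₂ p.1 → c ≤ Δ p.1 p.2 := by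
    rintro ⟨m'', j⟩ hp
    replace hp : j < n₂ m'' := hp
    show c ≤ Δ m'' j
    by_cases hmm : m'' = m
    · subst hmm
      rw [hc]
      have h5 := hle₁ m''
      exact anti_lem hdec m'' (by omega) (by omega)
    · have hx : Δ m (n₂ m) ≤ Δ m'' (n₂ m'' - 1) :=
        exchange_lem n₂ hs₂ hopt₂ m'' m hmm (by omega)
      have hy : Δ m'' (n₂ m'' - 1) ≤ Δ m'' j :=
        anti_lem hdec m'' (by omega) (by have := hle₂ m''; omega)
      linarith
  -- every element > c is taken by n₁
  have hsub : ∀ p : Fin M × ℕ, p.2 < K → c < Δ p.1 p.2 → p.2 < n₁ p.1 := by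
    rintro ⟨m'', j⟩ hjK hcp
    replace hjK : j < K := hjK
    replace hcp : c < Δ m'' j := hcp
    show j < n₁ m''
    by_contra hge
    push_neg at hge
    by_cases hmm : m'' = m
    · subst hmm
      have : Δ m'' j ≤ Δ m'' (n₂ m'') := anti_lem hdec m'' (by omega) hjK
      rw [← hc] at this
      linarith
    · have hx : Δ m'' (n₁ m'') ≤ Δ m (n₁ m - 1) :=
        exchange_lem n₁ hs₁ hopt₁ m m'' (Ne.symm hmm) (by omega)
      have hy : Δ m'' j ≤ Δ m'' (n₁ m'') := anti_lem hdec m'' (by omega) hjK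
      rw [hc1] at hx
      linarith
  -- card facts
  have hcard₂ : ((Finset.univ ×ˢ Finset.range K).filter
      fun p : Fin M × ℕ => p.2 < n₂ p.1).card = K := by
    rw [card_T n₂ hle₂, hs₂]
  have hcard₁ : ((Finset.univ ×ˢ Finset.range K).filter
      fun p : Fin M × ℕ => p.2 < n₁ p.1).card = K := by
    rw [card_T n₁ hle₁, hs₁]
  have hge_card : K ≤ ((Finset.univ ×ˢ Finset.range K).filter
      fun p : Fin M × ℕ => c ≤ Δ p.1 p.2).card := by
    have hss : ((Finset.univ ×ˢ Finset.range K).filter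
        fun p : Fin M × ℕ => p.2 < n₂ p.1) ⊆
        ((Finset.univ ×ˢ Finset.range K).filter
          fun p : Fin M × ℕ => c ≤ Δ p.1 p.2) := by
      intro p hp
      rw [Finset.mem_filter] at hp ⊢
      exact ⟨hp.1, hgeK p hp.2⟩
    calc K = _ := hcard₂.symm
    _ ≤ _ := Finset.card_le_card hss
  have hmem : (m, n₂ m) ∈ ((Finset.univ ×ˢ Finset.range K).filter
      fun p : Fin M × ℕ => p.2 < n₁ p.1) := by
    rw [Finset.mem_filter, Finset.mem_product, Finset.mem_range]
    exact ⟨⟨Finset.mem_univ m, by have := hle₁ m; omega⟩, hlt⟩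
  have hlt_card : ((Finset.univ ×ˢ Finset.range K).filter
      fun p : Fin M × ℕ => c < Δ p.1 p.2).card ≤ K - 1 := by
    have hss : ((Finset.univ ×ˢ Finset.range K).filter
        fun p : Fin M × ℕ => c < Δ p.1 p.2) ⊆
        (((Finset.univ ×ˢ Finset.range K).filter
          fun p : Fin M × ℕ => p.2 < n₁ p.1).erase (m, n₂ m)) := by
      intro p hp
      rw [Finset.mem_filter] at hp
      rw [Finset.mem_erase, Finset.mem_filter]
      have hpK : p.2 < K := by
        have := hp.1
        rw [Finset.mem_product, Finset.mem_range] at this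
        exact this.2
      refine ⟨?_, hp.1, hsub p hpK hp.2⟩
      intro h
      rw [h] at hp
      exact lt_irrefl _ hp.2
    calc _ ≤ _ := Finset.card_le_card hss
    _ = K - 1 := by rw [Finset.card_erase_of_mem hmem, hcard₁]
  -- bridge to the sorted list
  set s : Multiset ℝ := (Finset.univ ×ˢ Finset.range K).val.map
    (fun p : Fin M × ℕ => Δ p.1 p.2) with hsdef
  set L : List ℝ := Multiset.sort s (· ≤ ·) with hLdef
  have hlen : L.length = M * K := by
    rw [hLdef, Multiset.length_sort, hsdef, Multiset.card_map]
    simp [Finset.card_univ]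
  have hsorted : L.Pairwise (· ≤ ·) := Multiset.pairwise_sort s _
  have hKMK : K ≤ M * K := Nat.le_mul_of_pos_left K hM
  have hi : M * K - K < L.length := by omega
  have hcount_ge : L.countP (fun x => decide (c ≤ x)) =
      ((Finset.univ ×ˢ Finset.range K).filter
        fun p : Fin M × ℕ => c ≤ Δ p.1 p.2).card := by
    rw [← Multiset.coe_countP, hLdef, Multiset.sort_eq, hsdef, Multiset.countP_map]
    rfl
  have hcount_lt : L.countP (fun x => decide (c < x)) =
      ((Finset.univ ×ˢ Finset.range K).filter
        fun p : Fin M × ℕ => c < Δ p.1 p.2).card := by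
    rw [← Multiset.coe_countP, hLdef, Multiset.sort_eq, hsdef, Multiset.countP_map]
    rfl
  have hge : c ≤ L[M * K - K] := by
    apply sorted_getElem_ge L hsorted _ hi
    rw [hcount_ge, hlen]
    omega
  have hle : L[M * K - K] ≤ c := by
    apply sorted_getElem_le L hsorted _ hi
    rw [hcount_lt, hlen]
    omega
  refine ⟨hstep, ?_⟩
  rw [hc1]
  rw [List.getD_eq_getElem L 0 hi]
  exact le_antisymm hge hle

/-- If the marginal gains `Δ_m` are strictly decreasing on `{0,...,K−1}` and
`n*`, `ñ*` are two optimal profiles (maximizing `Σ_m Σ_{j=1}^{n_m} Δ_m(j−1)`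
over profiles summing to `K`), then `|n*_m − ñ*_m| ≤ 1` for every arm `m`, and
whenever `n*_m ≠ ñ*_m`, the value `Δ_m(max{n*_m, ñ*_m} − 1)` is a borderline
element, i.e. equals the `K`-th largest element of the multiset
`{Δ_m(j) : m < M, j < K}`. -/
theorem stmt_16 (M K : ℕ) (hM : 0 < M) (hK : 0 < K)
    (Δ : Fin M → ℕ → ℝ)
    (hdec : ∀ m : Fin M, ∀ j : ℕ, j + 1 < K → Δ m (j + 1) < Δ m j)
    (n₁ n₂ : Fin M → ℕ)
    (hs₁ : ∑ m, n₁ m = K) (hs₂ : ∑ m, n₂ m = K)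
    (hopt₁ : ∀ n : Fin M → ℕ, (∑ m, n m = K) →
      ∑ m, ∑ j ∈ Finset.range (n m), Δ m j ≤
        ∑ m, ∑ j ∈ Finset.range (n₁ m), Δ m j)
    (hopt₂ : ∀ n : Fin M → ℕ, (∑ m, n m = K) →
      ∑ m, ∑ j ∈ Finset.range (n m), Δ m j ≤
        ∑ m, ∑ j ∈ Finset.range (n₂ m), Δ m j) :
    ∀ m : Fin M,
      |(n₁ m : ℤ) - (n₂ m : ℤ)| ≤ 1 ∧
      (n₁ m ≠ n₂ m →
        Δ m (max (n₁ m) (n₂ m) - 1) =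
          (((Finset.univ ×ˢ Finset.range K).val.map
              fun p : Fin M × ℕ => Δ p.1 p.2).sort (· ≤ ·)).getD
            (M * K - K) 0) := by
  intro m
  rcases lt_trichotomy (n₁ m) (n₂ m) with h | h | h
  · obtain ⟨hstep, heq⟩ := main_aux M K hM hK Δ hdec n₂ n₁ hs₂ hs₁ hopt₂ hopt₁ m h
    constructor
    · rw [abs_le]; omega
    · intro _
      rw [max_eq_right (le_of_lt h)]
      exact heq
  · constructor
    · rw [h]; simp
    · intro hne; exact absurd h hne
  · obtain ⟨hstep, heq⟩ := main_aux M K hM hK Δ hdec n₁ n₂ hs₁ hs₂ hopt₁ hopt₂ m h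
    constructor
    · rw [abs_le]; omega
    · intro _
      rw [max_eq_left (le_of_lt h)]
      exact heq
end
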